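/- arXiv:2001.05944 — 5 statements merged into one kernel-verified Lean document; each statement's English description precedes it below -/
import Mathlib

section
/- Assume Dickson's conjecture. Let a be a positive integer and b an integer such that both b and 2b+1 are coprime to a. Then the arithmetic progression with common difference a and first term b contains infinitely many Sophie Germain primes, i.e. there are infinitely many positive integers t such that at + b is prime and 2(at + b) + 1 is prime. -/
/-- Dickson's conjecture: given finitely many linear polynomials `t ↦ a i * t + b i`
with integer coefficients and positive leading coefficients, such that no prime divides
the value of their product at every integer, there are infinitely many positive integers
`t` at which all of them take prime values. -/
def DicksonConjecture : Prop :=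
  ∀ (s : ℕ) (a b : Fin s → ℤ),
    (∀ i, 0 < a i) →
    (∀ p : ℕ, p.Prime → ∃ t : ℤ, ¬ ((p : ℤ) ∣ ∏ i, (a i * t + b i))) →
    {t : ℕ | 0 < t ∧ ∀ i, ∃ q : ℕ, q.Prime ∧ a i * (t : ℤ) + b i = q}.Infinite

/-! The pair `a t + b`, `2 (a t + b) + 1` has no fixed prime divisor: a prime dividing `a` sees
the constant value `b (2b + 1)`, and for any other prime `a t + b` runs through all residues,
among which some `c` has `c (2c + 1) ≠ 0`. Dickson's conjecture then applies to the pair. -/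

theorem ZMod.exists_intCast_mul_add_eq {n : ℕ} {a : ℤ} (ha : IsUnit (a : ZMod n)) (b : ℤ)
    (c : ZMod n) : ∃ t : ℤ, ((a * t + b : ℤ) : ZMod n) = c := by
  refine ⟨((ha.unit⁻¹ * (c - b) : ZMod n).cast : ℤ), ?_⟩
  push_cast
  rw [← mul_assoc, IsUnit.mul_val_inv, one_mul, sub_add_cancel]

theorem ZMod.exists_mul_two_mul_add_one_ne_zero (p : ℕ) [Fact p.Prime] :
    ∃ c : ZMod p, c * (2 * c + 1) ≠ 0 := by
  by_cases h3 : (3 : ZMod p) = 0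
  · refine ⟨2, ?_⟩
    rw [show (2 : ZMod p) * (2 * 2 + 1) = 1 by linear_combination 3 * h3]
    exact one_ne_zero
  · exact ⟨1, by norm_num [h3]⟩

theorem exists_not_dvd_germain_pair {a b : ℤ} (hb : IsCoprime b a)
    (hb' : IsCoprime (2 * b + 1) a) {p : ℕ} (hp : p.Prime) :
    ∃ t : ℤ, ¬ (p : ℤ) ∣ (a * t + b) * (2 * a * t + (2 * b + 1)) := by
  have := Fact.mk hp
  have hpz : Prime (p : ℤ) := Nat.prime_iff_prime_int.mp hp
  by_cases hpa : (p : ℤ) ∣ a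
  · refine ⟨0, fun hdvd => ?_⟩
    rw [mul_zero, zero_add, mul_zero, zero_add] at hdvd
    rcases hpz.dvd_mul.mp hdvd with h | h
    · exact hpz.not_isUnit (hb.isUnit_of_dvd' h hpa)
    · exact hpz.not_isUnit (hb'.isUnit_of_dvd' h hpa)
  · have hunit : IsUnit (a : ZMod p) := by
      rwa [isUnit_iff_ne_zero, Ne, ZMod.intCast_zmod_eq_zero_iff_dvd]
    obtain ⟨c, hc⟩ := ZMod.exists_mul_two_mul_add_one_ne_zero p
    obtain ⟨t, ht⟩ := ZMod.exists_intCast_mul_add_eq hunit b c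
    refine ⟨t, fun hdvd => hc ?_⟩
    rw [← ZMod.intCast_zmod_eq_zero_iff_dvd] at hdvd
    push_cast at ht hdvd
    rw [← ht]
    linear_combination hdvd

/-- Assuming Dickson's conjecture, if `a > 0` and both `b` and `2b+1` are coprime to `a`,
then there are infinitely many positive integers `t` such that `a*t + b` is a (Sophie
Germain) prime, i.e. both `a*t + b` and `2*(a*t + b) + 1` are prime. -/
theorem germain_primes_in_ap (hD : DicksonConjecture)
    (a : ℤ) (ha : 0 < a) (b : ℤ) (hb : IsCoprime b a) (hb' : IsCoprime (2 * b + 1) a) :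
    {t : ℕ | 0 < t ∧
      (∃ p : ℕ, p.Prime ∧ a * (t : ℤ) + b = p) ∧
      (∃ q : ℕ, q.Prime ∧ 2 * (a * (t : ℤ) + b) + 1 = q)}.Infinite := by
  have hpos : ∀ i, 0 < ![a, 2 * a] i := by
    intro i
    fin_cases i <;> simp [ha]
  have hfree : ∀ p : ℕ, p.Prime →
      ∃ t : ℤ, ¬ (p : ℤ) ∣ ∏ i, (![a, 2 * a] i * t + ![b, 2 * b + 1] i) := by
    intro p hp
    simpa [Fin.prod_univ_two] using exists_not_dvd_germain_pair hb hb' hp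
  refine (hD 2 _ _ hpos hfree).mono ?_
  rintro t ⟨ht, hprime⟩
  obtain ⟨p, hp, hpt⟩ := hprime 0
  obtain ⟨q, hq, hqt⟩ := hprime 1
  refine ⟨ht, ⟨p, hp, by simpa using hpt⟩, q, hq, ?_⟩
  simp only [Fin.isValue, Matrix.cons_val_one, Matrix.cons_val_fin_one] at hqt
  linarith
end

section
/- Let a be a positive integer and b an integer such that both b and 2b+1 are coprime to a. Then the polynomial G(t) = (at + b)(2at + 2b + 1) has no fixed prime divisor: for every prime p there exists an integer t such that p does not divide (at + b)(2at + 2b + 1). -/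
/-- If `a > 0` and both `b` and `2b+1` are coprime to `a`, then the polynomial
`G(t) = (a*t + b) * (2*a*t + 2*b + 1)` has no fixed prime divisor: for every prime `p`
there is an integer `t` with `p ∤ G(t)`. -/
theorem no_fixed_prime_divisor (a : ℤ) (ha : 0 < a) (b : ℤ)
    (hb : IsCoprime b a) (hb' : IsCoprime (2 * b + 1) a) :
    ∀ p : ℕ, p.Prime →
      ∃ t : ℤ, ¬ ((p : ℤ) ∣ (a * t + b) * (2 * a * t + 2 * b + 1)) := by
  intro p hp
  haveI := Fact.mk hp
  suffices h : ∃ t : ℤ, (((a * t + b) * (2 * a * t + 2 * b + 1) : ℤ) : ZMod p) ≠ 0 by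
    obtain ⟨t, ht⟩ := h
    exact ⟨t, fun hd => ht ((ZMod.intCast_zmod_eq_zero_iff_dvd _ p).mpr hd)⟩
  set A : ZMod p := (a : ZMod p) with hA
  set B : ZMod p := (b : ZMod p) with hB
  by_cases h0 : A = 0
  · refine ⟨0, ?_⟩
    push_cast
    rw [← hA, ← hB]
    ring_nf
    obtain ⟨u, v, huv⟩ := hb
    obtain ⟨u', v', huv'⟩ := hb'
    have h1 : (u : ZMod p) * B = 1 := by
      have := congrArg (fun x : ℤ => (x : ZMod p)) huv
      push_cast at this
      rw [← hA, ← hB, h0] at this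
      simpa using this
    have h2 : (u' : ZMod p) * (2 * B + 1) = 1 := by
      have := congrArg (fun x : ℤ => (x : ZMod p)) huv'
      push_cast at this
      rw [← hA, ← hB, h0] at this
      simpa using this
    have hB0 : B ≠ 0 := by
      intro h; rw [h, mul_zero] at h1; exact one_ne_zero h1.symm
    have hB1 : (2 * B + 1) ≠ 0 := by
      intro h; rw [h, mul_zero] at h2; exact one_ne_zero h2.symm
    have := mul_ne_zero hB0 hB1
    intro hcon
    apply this
    calc B * (2 * B + 1) = B + B ^ 2 * 2 := by ring
    _ = 0 := hcon
  · obtain ⟨t, ht⟩ := ZMod.intCast_surjective (n := p) (A⁻¹ * (-1 - B))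
    refine ⟨t, ?_⟩
    push_cast
    rw [← hA, ← hB, ht]
    have h1 : A * (A⁻¹ * (-1 - B)) = -1 - B := by
      rw [← mul_assoc, mul_inv_cancel₀ h0, one_mul]
    intro hcon
    rw [mul_assoc (2 : ZMod p) A (A⁻¹ * (-1 - B)), h1] at hcon
    have hone : (1 : ZMod p) = 0 := by linear_combination hcon
    exact one_ne_zero hone
end

section
/- Assume Dickson's conjecture. Let H ≥ 5 be an integer. Then there exist Sophie Germain primes p_1, p_2, …, p_H such that: (i) p_1 > 4H + 1 and p_{h+1} > 3·p_h·(2p_h+1)^3 for all h in [1, H−1]; (ii) for all h in [1, H] and all primes p with 5 ≤ p ≤ H, gcd(2h + p_h, p) = 1 and gcd(2h + p_h(2p_h+1)^3, p) = 1; (iii) for all h, k in [1, H] with h ≠ k, gcd(p_h − 2(k−h), p_k(2p_k+1)) = 1 and gcd(p_h(2p_h+1)^3 − 2(k−h), p_k(2p_k+1)) = 1. -/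
open Polynomial

def IsGermainResidue {ℓ : ℕ} (C : Finset (ZMod ℓ)) (r : ZMod ℓ) : Prop :=
  r * (2 * r + 1) ≠ 0 ∧ ∀ c ∈ C, (r + c) * (r * (2 * r + 1) ^ 3 + c) ≠ 0

lemma IsGermainResidue.add_ne_zero {ℓ : ℕ} [Fact ℓ.Prime] {C : Finset (ZMod ℓ)} {r c : ZMod ℓ}
    (h : IsGermainResidue C r) (hc : c ∈ C) : r + c ≠ 0 ∧ r * (2 * r + 1) ^ 3 + c ≠ 0 :=
  mul_ne_zero_iff.mp (h.2 c hc)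

lemma X_mul_two_mul_X_add_one_pow_three_add_C_ne_zero {R : Type*} [CommRing R] [Nontrivial R]
    (c : R) : (X * (2 * X + 1) ^ 3 + C c : R[X]) ≠ 0 := by
  intro h
  have := congrArg (coeff · 1) h
  simp only [coeff_add, coeff_X_mul, coeff_C_succ, add_zero, coeff_zero,
    coeff_zero_eq_eval_zero] at this
  simp at this

lemma exists_isGermainResidue_of_card_lt {ℓ : ℕ} [Fact ℓ.Prime] (C : Finset (ZMod ℓ))
    (hC : 5 * C.card + 2 < ℓ) : ∃ r, IsGermainResidue C r := by
  set Q : (ZMod ℓ)[X] := X * (2 * X + 1) *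
    ∏ c ∈ C, (X + Polynomial.C c) * (X * (2 * X + 1) ^ 3 + Polynomial.C c)
  have hQ : Q ≠ 0 := by
    refine mul_ne_zero (mul_ne_zero X_ne_zero ?_) (Finset.prod_ne_zero_iff.mpr fun c _ =>
      mul_ne_zero (X_add_C_ne_zero c) (X_mul_two_mul_X_add_one_pow_three_add_C_ne_zero c))
    intro h
    simpa using congrArg (eval 0) h
  have hdeg : Q.natDegree ≤ 2 + 5 * C.card := by
    refine natDegree_mul_le_of_le (by compute_degree) ((natDegree_prod_le _ _).trans ?_)
    exact (Finset.sum_le_card_nsmul C _ 5 fun c _ => by compute_degree).trans_eq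
      (by simp [mul_comm])
  obtain ⟨r, hr⟩ := exists_eval_ne_zero_of_natDegree_lt_card Q hQ (by
    rw [Cardinal.mk_fintype, ZMod.card]; exact_mod_cast (by omega : Q.natDegree < ℓ))
  simp only [Q, eval_mul, eval_prod, eval_add, eval_X, eval_C, eval_pow, eval_ofNat,
    eval_one] at hr
  rw [mul_ne_zero_iff, Finset.prod_ne_zero_iff] at hr
  exact ⟨r, hr⟩

lemma exists_isGermainResidue_singleton {ℓ : ℕ} (hℓ : ℓ.Prime) (hℓ5 : 5 ≤ ℓ) (c : ZMod ℓ) :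
    ∃ r, IsGermainResidue {c} r := by
  rcases lt_or_ge ℓ 11 with hℓ11 | hℓ11
  · suffices ∀ c : ZMod ℓ, ∃ r : ZMod ℓ,
        r * (2 * r + 1) ≠ 0 ∧ (r + c) * (r * (2 * r + 1) ^ 3 + c) ≠ 0 by
      simpa [IsGermainResidue] using this c
    interval_cases ℓ <;> decide
  · have := Fact.mk hℓ
    exact exists_isGermainResidue_of_card_lt {c} (by simp; omega)

/-- The shifts `c` for which `P + c` and `P (2 P + 1)³ + c` must be prime to `ℓ` when `P` is the
`m`-th prime of the family: `2 m` for the small primes `ℓ ≤ H` of condition (ii), and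
`2 (m - k)` for the primes `ℓ = p k, 2 p k + 1` (`k < m`) of condition (iii). -/
def germainShifts (H m ℓ : ℕ) : Finset (ZMod ℓ) :=
  if ℓ ≤ H then {2 * (m : ZMod ℓ)} else (Finset.Ico 1 m).image fun k : ℕ => 2 * ((m : ZMod ℓ) - k)

lemma exists_isGermainResidue_germainShifts {H m ℓ : ℕ} (hm : m ≤ H) (hℓ : ℓ.Prime)
    (hℓH : 5 ≤ ℓ ∧ ℓ ≤ H ∨ 5 * H + 2 < ℓ) : ∃ r, IsGermainResidue (germainShifts H m ℓ) r := by
  unfold germainShifts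
  split_ifs with hℓH'
  · exact exists_isGermainResidue_singleton hℓ (by omega) _
  · have := Fact.mk hℓ
    refine exists_isGermainResidue_of_card_lt _ ?_
    calc 5 * _ + 2 ≤ 5 * m + 2 := by
          gcongr
          exact Finset.card_image_le.trans ((Nat.card_Ico 1 m).trans_le (Nat.sub_le m 1))
      _ < ℓ := by omega

lemma exists_not_dvd_mul_two_mul_add_one {ℓ : ℕ} (hℓ : ℓ.Prime) (M r : ℕ)
    (h : ℓ ∣ M → (r : ZMod ℓ) * (2 * r + 1) ≠ 0) :
    ∃ t : ℤ, ¬ (ℓ : ℤ) ∣ (M * t + r) * (2 * (M * t + r) + 1) := by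
  have := Fact.mk hℓ
  simp_rw [← ZMod.intCast_zmod_eq_zero_iff_dvd]
  push_cast
  by_cases hM : ℓ ∣ M
  · exact ⟨0, by simpa using h hM⟩
  · have hM0 : (M : ZMod ℓ) ≠ 0 := by rwa [Ne, ZMod.natCast_eq_zero_iff]
    -- `M t + r ≡ -1` makes the product `≡ 1`
    refine ⟨((M : ZMod ℓ)⁻¹ * (-1 - r)).val, ?_⟩
    rw [Int.cast_natCast, ZMod.natCast_zmod_val, mul_inv_cancel_left₀ hM0]
    norm_num

theorem exists_germain_prime_modEq (hD : DicksonConjecture) {M r : ℕ} (hM : 0 < M)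
    (hMr : ∀ ℓ : ℕ, ℓ.Prime → ℓ ∣ M → (r : ZMod ℓ) * (2 * r + 1) ≠ 0) (N : ℕ) :
    ∃ P, N < P ∧ P.Prime ∧ (2 * P + 1).Prime ∧ P ≡ r [MOD M] := by
  have hfix : ∀ ℓ : ℕ, ℓ.Prime → ∃ t : ℤ,
      ¬ (ℓ : ℤ) ∣ ∏ i, (![(M : ℤ), 2 * M] i * t + ![(r : ℤ), 2 * r + 1] i) := by
    intro ℓ hℓ
    obtain ⟨t, ht⟩ := exists_not_dvd_mul_two_mul_add_one hℓ M r (hMr ℓ hℓ)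
    refine ⟨t, ?_⟩
    convert ht using 2
    simp only [Fin.prod_univ_two, Matrix.cons_val_zero, Matrix.cons_val_one]
    ring
  have hpos : ∀ i, 0 < ![(M : ℤ), 2 * M] i := by
    intro i; fin_cases i <;> simp <;> omega
  obtain ⟨t, ⟨-, ht⟩, hNt⟩ := (hD 2 _ _ hpos hfix).exists_gt N
  obtain ⟨q, hq, hqt⟩ := ht 0
  obtain ⟨q', hq', hq't⟩ := ht 1
  simp only [Fin.isValue, Matrix.cons_val_zero, Matrix.cons_val_one] at hqt hq't
  have hP : M * t + r = q := by exact_mod_cast hqt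
  have hP' : 2 * (M * t + r) + 1 = q' := by zify; rw [← hq't]; ring
  refine ⟨M * t + r, ?_, hP ▸ hq, hP' ▸ hq', by simp [Nat.ModEq]⟩
  have : t ≤ M * t := Nat.le_mul_of_pos_left t hM
  omega

theorem exists_germain_prime_natCast_eq (hD : DicksonConjecture) (S : Finset ℕ)
    (hS : ∀ ℓ ∈ S, ℓ.Prime) (f : ∀ ℓ : ℕ, ZMod ℓ) (hf : ∀ ℓ ∈ S, f ℓ * (2 * f ℓ + 1) ≠ 0)
    (N : ℕ) : ∃ P, N < P ∧ P.Prime ∧ (2 * P + 1).Prime ∧ ∀ ℓ ∈ S, (P : ZMod ℓ) = f ℓ := by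
  obtain ⟨r, hr⟩ := Nat.chineseRemainderOfFinset (fun ℓ => (f ℓ).val) id S
    (fun ℓ hℓ => (hS ℓ hℓ).ne_zero)
    (fun a ha b hb hab => (Nat.coprime_primes (hS a ha) (hS b hb)).mpr hab)
  replace hr : ∀ ℓ ∈ S, (r : ZMod ℓ) = f ℓ := fun ℓ hℓ => by
    have : NeZero ℓ := ⟨(hS ℓ hℓ).ne_zero⟩
    rw [(ZMod.natCast_eq_natCast_iff _ _ _).mpr (hr ℓ hℓ), ZMod.natCast_zmod_val]
  obtain ⟨P, hPN, hP, hP', hPr⟩ := exists_germain_prime_modEq hD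
    (Finset.prod_pos fun ℓ hℓ => (hS ℓ hℓ).pos) (r := r) (fun ℓ hℓ hℓS => by
      obtain ⟨a, haS, hℓa⟩ := (Nat.prime_iff.mp hℓ).exists_mem_finset_dvd hℓS
      obtain rfl := (Nat.prime_dvd_prime_iff_eq hℓ (hS a haS)).mp hℓa
      rw [hr ℓ haS]
      exact hf ℓ haS) N
  refine ⟨P, hPN, hP, hP', fun ℓ hℓ => ?_⟩
  rw [← hr ℓ hℓ, ZMod.natCast_eq_natCast_iff]
  exact Nat.ModEq.of_dvd (Finset.dvd_prod_of_mem id hℓ) hPr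

/-- `P` is admissible as the `m`-th prime of the family after `p 1, …, p (m - 1)`. The
conditions (iii) with modulus `P (2 P + 1)` are not listed: they follow from `growth`. -/
structure IsGermainStep (H : ℕ) (p : ℕ → ℕ) (m P : ℕ) : Prop where
  prime : P.Prime
  prime_two_mul_add_one : (2 * P + 1).Prime
  lt : 5 * H + 2 < P
  growth : ∀ k ∈ Finset.Ico 1 m, 3 * p k * (2 * p k + 1) ^ 3 < P
  not_dvd_small : ∀ q : ℕ, q.Prime → 5 ≤ q → q ≤ H →
    ¬ q ∣ 2 * m + P ∧ ¬ q ∣ 2 * m + P * (2 * P + 1) ^ 3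
  not_dvd_cross : ∀ k ∈ Finset.Ico 1 m, ∀ ℓ ∈ ({p k, 2 * p k + 1} : Finset ℕ),
    ¬ (ℓ : ℤ) ∣ P - 2 * ((k : ℤ) - m) ∧ ¬ (ℓ : ℤ) ∣ P * (2 * P + 1) ^ 3 - 2 * ((k : ℤ) - m)

lemma IsGermainStep.congr {H m P : ℕ} {p p' : ℕ → ℕ} (h : IsGermainStep H p m P)
    (hpp' : ∀ k < m, p k = p' k) : IsGermainStep H p' m P where
  __ := h
  growth k hk := hpp' k (Finset.mem_Ico.mp hk).2 ▸ h.growth k hk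
  not_dvd_cross k hk := hpp' k (Finset.mem_Ico.mp hk).2 ▸ h.not_dvd_cross k hk

def germainModuli (H m : ℕ) (p : ℕ → ℕ) : Finset ℕ :=
  (Finset.Icc 5 H).filter Nat.Prime ∪
    ((Finset.Ico 1 m).image p ∪ (Finset.Ico 1 m).image fun k => 2 * p k + 1)

lemma mem_germainModuli_of_le {H m q : ℕ} {p : ℕ → ℕ} (hq : q.Prime) (hq5 : 5 ≤ q)
    (hqH : q ≤ H) : q ∈ germainModuli H m p :=
  Finset.mem_union_left _ (by simp [hq, hq5, hqH])

lemma mem_germainModuli_of_mem {H m k ℓ : ℕ} {p : ℕ → ℕ} (hk : k ∈ Finset.Ico 1 m)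
    (hℓ : ℓ ∈ ({p k, 2 * p k + 1} : Finset ℕ)) : ℓ ∈ germainModuli H m p := by
  simp only [Finset.mem_insert, Finset.mem_singleton] at hℓ
  rcases hℓ with rfl | rfl <;> simp [germainModuli, Finset.mem_image_of_mem _ hk]

lemma prime_and_bound_of_mem_germainModuli {H m ℓ : ℕ} {p : ℕ → ℕ}
    (hp : ∀ k ∈ Finset.Ico 1 m, (p k).Prime ∧ (2 * p k + 1).Prime ∧ 5 * H + 2 < p k)
    (hℓ : ℓ ∈ germainModuli H m p) : ℓ.Prime ∧ (5 ≤ ℓ ∧ ℓ ≤ H ∨ 5 * H + 2 < ℓ) := by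
  simp only [germainModuli, Finset.mem_union, Finset.mem_filter, Finset.mem_Icc,
    Finset.mem_image] at hℓ
  rcases hℓ with ⟨hℓH, hℓ⟩ | ⟨k, hk, rfl⟩ | ⟨k, hk, rfl⟩
  · exact ⟨hℓ, Or.inl hℓH⟩
  · exact ⟨(hp k hk).1, Or.inr (hp k hk).2.2⟩
  · exact ⟨(hp k hk).2.1, Or.inr (by linarith [(hp k hk).2.2])⟩

lemma exists_isGermainStep (hD : DicksonConjecture) {H m : ℕ} (hm : m ≤ H) (p : ℕ → ℕ)
    (hp : ∀ k ∈ Finset.Ico 1 m, IsGermainStep H p k (p k)) : ∃ P, IsGermainStep H p m P := by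
  have hS (ℓ) (hℓ : ℓ ∈ germainModuli H m p) := prime_and_bound_of_mem_germainModuli
    (fun k hk => ⟨(hp k hk).prime, (hp k hk).prime_two_mul_add_one, (hp k hk).lt⟩) hℓ
  have hres (ℓ : ℕ) :
      ∃ r : ZMod ℓ, ℓ ∈ germainModuli H m p → IsGermainResidue (germainShifts H m ℓ) r := by
    by_cases hℓ : ℓ ∈ germainModuli H m p
    · exact (exists_isGermainResidue_germainShifts hm (hS ℓ hℓ).1 (hS ℓ hℓ).2).imp
        fun _ h _ => h
    · exact ⟨0, fun h => absurd h hℓ⟩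
  choose f hf using hres
  obtain ⟨P, hPN, hP, hP', hPf⟩ := exists_germain_prime_natCast_eq hD _ (fun ℓ hℓ => (hS ℓ hℓ).1)
    f (fun ℓ hℓ => (hf ℓ hℓ).1) (5 * H + 2 + ∑ k ∈ Finset.Ico 1 m, 3 * p k * (2 * p k + 1) ^ 3)
  refine ⟨P, hP, hP', by omega, fun k hk => ?_, fun q hq hq5 hqH => ?_, fun k hk ℓ hℓ => ?_⟩
  · have := Finset.single_le_sum (fun k _ => Nat.zero_le (3 * p k * (2 * p k + 1) ^ 3)) hk
    omega
  · have hqS := mem_germainModuli_of_le (m := m) (p := p) hq hq5 hqH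
    have := Fact.mk hq
    have hfq := hf q hqS
    rw [germainShifts, if_pos hqH] at hfq
    obtain ⟨h1, h2⟩ := hfq.add_ne_zero (Finset.mem_singleton_self _)
    simp only [← ZMod.natCast_eq_zero_iff, Nat.cast_add, Nat.cast_mul, Nat.cast_pow,
      Nat.cast_ofNat, Nat.cast_one, hPf q hqS]
    exact ⟨by rwa [add_comm], by rwa [add_comm]⟩
  · have hℓS := mem_germainModuli_of_mem (H := H) hk hℓ
    have hℓH : ¬ ℓ ≤ H := by
      simp only [Finset.mem_insert, Finset.mem_singleton] at hℓ
      rcases hℓ with rfl | rfl <;> linarith [(hp k hk).lt]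
    have := Fact.mk (hS ℓ hℓS).1
    have hfℓ := hf ℓ hℓS
    rw [germainShifts, if_neg hℓH] at hfℓ
    obtain ⟨h1, h2⟩ := hfℓ.add_ne_zero (Finset.mem_image_of_mem _ hk)
    simp only [← ZMod.intCast_zmod_eq_zero_iff_dvd, Int.cast_sub, Int.cast_mul, Int.cast_pow,
      Int.cast_add, Int.cast_natCast, Int.cast_ofNat, Int.cast_one, hPf ℓ hℓS]
    exact ⟨fun h => h1 (by linear_combination h), fun h => h2 (by linear_combination h)⟩

lemma exists_germain_chain (hD : DicksonConjecture) (H : ℕ) :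
    ∀ n ≤ H, ∃ p : ℕ → ℕ, ∀ m ∈ Finset.Icc 1 n, IsGermainStep H p m (p m)
  | 0, _ => ⟨fun _ => 0, by simp⟩
  | n + 1, hn => by
    obtain ⟨p, hp⟩ := exists_germain_chain hD H n (by omega)
    obtain ⟨P, hP⟩ := exists_isGermainStep hD hn p fun k hk => hp k (by
      rw [Finset.mem_Ico] at hk; rw [Finset.mem_Icc]; omega)
    refine ⟨Function.update p (n + 1) P, fun m hm => ?_⟩
    rw [Finset.mem_Icc] at hm
    have hagree : ∀ k < m, p k = Function.update p (n + 1) P k := fun k hk =>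
      (Function.update_of_ne (by omega) _ _).symm
    rcases eq_or_ne m (n + 1) with rfl | hm'
    · rw [Function.update_self]
      exact hP.congr hagree
    · rw [Function.update_of_ne hm']
      exact (hp m (Finset.mem_Icc.mpr ⟨hm.1, by omega⟩)).congr hagree

lemma int_gcd_mul_two_mul_add_one_eq_one {a : ℤ} {q : ℕ} (hq : q.Prime)
    (hq' : (2 * q + 1).Prime) (ha : ∀ ℓ ∈ ({q, 2 * q + 1} : Finset ℕ), ¬ (ℓ : ℤ) ∣ a) :
    Int.gcd a (q * (2 * q + 1)) = 1 := by
  rw [← Int.isCoprime_iff_gcd_eq_one]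
  refine IsCoprime.mul_right ?_ ?_
  · exact ((Nat.prime_iff_prime_int.mp hq).coprime_iff_not_dvd.mpr (ha q (by simp))).symm
  · have := (Nat.prime_iff_prime_int.mp hq').coprime_iff_not_dvd.mpr (ha (2 * q + 1) (by simp))
    exact_mod_cast this.symm

lemma int_gcd_mul_two_mul_add_one_eq_one_of_lt {a : ℤ} {q : ℕ} (hq : q.Prime)
    (hq' : (2 * q + 1).Prime) (ha : 0 < a) (haq : a < q) : Int.gcd a (q * (2 * q + 1)) = 1 :=
  int_gcd_mul_two_mul_add_one_eq_one hq hq' fun ℓ hℓ hdvd => by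
    have := Int.le_of_dvd ha hdvd
    simp only [Finset.mem_insert, Finset.mem_singleton] at hℓ
    rcases hℓ with rfl | rfl <;> push_cast at this <;> omega

lemma IsGermainStep.int_gcd_eq_one_of_lt {H h k : ℕ} {p : ℕ → ℕ}
    (hh : IsGermainStep H p h (p h)) (hk : IsGermainStep H p k (p k)) (h1 : 1 ≤ h) (hhk : h < k)
    (hkH : k ≤ H) :
    Int.gcd ((p h : ℤ) - 2 * ((k : ℤ) - (h : ℤ))) ((p k : ℤ) * (2 * (p k : ℤ) + 1)) = 1 ∧
    Int.gcd ((p h : ℤ) * (2 * (p h : ℤ) + 1) ^ 3 - 2 * ((k : ℤ) - (h : ℤ)))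
      ((p k : ℤ) * (2 * (p k : ℤ) + 1)) = 1 := by
  have hsize : (3 * p h * (2 * p h + 1) ^ 3 : ℤ) < p k := by
    exact_mod_cast hk.growth h (Finset.mem_Ico.mpr ⟨h1, hhk⟩)
  have hph : (5 * H + 2 : ℤ) < p h := by exact_mod_cast hh.lt
  have hcube : (p h : ℤ) ≤ p h * (2 * p h + 1) ^ 3 :=
    le_mul_of_one_le_right (by positivity) (one_le_pow₀ (by omega))
  constructor <;>
    refine int_gcd_mul_two_mul_add_one_eq_one_of_lt hk.prime hk.prime_two_mul_add_one ?_ ?_ <;>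
    nlinarith

lemma IsGermainStep.int_gcd_eq_one_of_gt {H h k : ℕ} {p : ℕ → ℕ}
    (hh : IsGermainStep H p h (p h)) (hk : IsGermainStep H p k (p k)) (hk1 : 1 ≤ k)
    (hkh : k < h) :
    Int.gcd ((p h : ℤ) - 2 * ((k : ℤ) - (h : ℤ))) ((p k : ℤ) * (2 * (p k : ℤ) + 1)) = 1 ∧
    Int.gcd ((p h : ℤ) * (2 * (p h : ℤ) + 1) ^ 3 - 2 * ((k : ℤ) - (h : ℤ)))
      ((p k : ℤ) * (2 * (p k : ℤ) + 1)) = 1 := by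
  have := hh.not_dvd_cross k (Finset.mem_Ico.mpr ⟨hk1, hkh⟩)
  exact ⟨int_gcd_mul_two_mul_add_one_eq_one hk.prime hk.prime_two_mul_add_one
      fun ℓ hℓ => (this ℓ hℓ).1,
    int_gcd_mul_two_mul_add_one_eq_one hk.prime hk.prime_two_mul_add_one
      fun ℓ hℓ => (this ℓ hℓ).2⟩

/-- Assuming Dickson's conjecture, for every `H ≥ 5` there exist Sophie Germain primes
`p 1, …, p H` satisfying the size conditions (i) and the coprimality conditions (ii),
(iii) of Proposition 1. -/
theorem exists_family_germain_primes (hD : DicksonConjecture) (H : ℕ) (hH : 5 ≤ H) :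
    ∃ p : ℕ → ℕ,
      -- Sophie Germain primes
      (∀ h, 1 ≤ h → h ≤ H → (p h).Prime ∧ (2 * p h + 1).Prime) ∧
      -- (i) size conditions
      4 * H + 1 < p 1 ∧
      (∀ h, 1 ≤ h → h ≤ H - 1 → 3 * p h * (2 * p h + 1) ^ 3 < p (h + 1)) ∧
      -- (ii) coprimality with small primes
      (∀ h, 1 ≤ h → h ≤ H → ∀ q : ℕ, q.Prime → 5 ≤ q → q ≤ H →
        Nat.gcd (2 * h + p h) q = 1 ∧
        Nat.gcd (2 * h + p h * (2 * p h + 1) ^ 3) q = 1) ∧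
      -- (iii) cross coprimality conditions
      (∀ h k, 1 ≤ h → h ≤ H → 1 ≤ k → k ≤ H → h ≠ k →
        Int.gcd ((p h : ℤ) - 2 * ((k : ℤ) - (h : ℤ))) ((p k : ℤ) * (2 * (p k : ℤ) + 1)) = 1 ∧
        Int.gcd ((p h : ℤ) * (2 * (p h : ℤ) + 1) ^ 3 - 2 * ((k : ℤ) - (h : ℤ)))
          ((p k : ℤ) * (2 * (p k : ℤ) + 1)) = 1) := by
  obtain ⟨p, hp⟩ := exists_germain_chain hD H H le_rfl
  replace hp : ∀ h, 1 ≤ h → h ≤ H → IsGermainStep H p h (p h) := fun h h1 h2 =>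
    hp h (Finset.mem_Icc.mpr ⟨h1, h2⟩)
  refine ⟨p, fun h h1 h2 => ⟨(hp h h1 h2).prime, (hp h h1 h2).prime_two_mul_add_one⟩,
    by linarith [(hp 1 le_rfl (by omega)).lt], fun h h1 h2 => ?_, fun h h1 h2 q hq hq5 hqH => ?_,
    fun h k h1 h2 k1 k2 hhk => ?_⟩
  · exact (hp (h + 1) (by omega) (by omega)).growth h (Finset.mem_Ico.mpr ⟨h1, by omega⟩)
  · obtain ⟨d1, d2⟩ := (hp h h1 h2).not_dvd_small q hq hq5 hqH
    exact ⟨(hq.coprime_iff_not_dvd.mpr d1).symm, (hq.coprime_iff_not_dvd.mpr d2).symm⟩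
  · rcases lt_or_gt_of_ne hhk with hlt | hgt
    · exact (hp h h1 h2).int_gcd_eq_one_of_lt (hp k k1 k2) h1 hlt k2
    · exact (hp h h1 h2).int_gcd_eq_one_of_gt (hp k k1 k2) k1 hgt
end

section
/- Let H ≥ 5 and let p_1, …, p_H be Sophie Germain primes satisfying p_1 > 4H+1, p_{h+1} > 3·p_h·(2p_h+1)^3 for 1 ≤ h ≤ H−1, together with: for all h in [1,H] and all primes p in [5,H], gcd(2h + p_h, p) = 1 and gcd(2h + p_h(2p_h+1)^3, p) = 1; and for all h ≠ k in [1,H], gcd(p_h − 2(k−h), p_k(2p_k+1)) = 1 and gcd(p_h(2p_h+1)^3 − 2(k−h), p_k(2p_k+1)) = 1. Define n_h = 2p_h if h ≢ 2 (mod 3) and n_h = 2p_h(2p_h+1)^3 if h ≡ 2 (mod 3); let Π_H be the product of all primes p with 5 ≤ p ≤ H, let U = 12·Π_H·∏_{h=1}^H n_h^5, and let r be a positive integer with r ≡ 1 (mod 12Π_H) and r ≡ 1 − 4h (mod (n_h/2)^2) for every h in [1,H]. Then each polynomial F_h(t) = (Ut + r − 1 + 4h)/n_h + 1 is a linear polynomial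 with integer coefficients and positive leading coefficient, and the product F = ∏_{h=1}^H F_h has no fixed prime divisor: for every prime p there exists an integer t such that p does not divide F(t). -/
/-! Write `n h = 2 m_h` with `m_h` odd (`nHalf`). The congruences on `r` give
`4 m_h² ∣ r - 1 + 4h`, so the constant term `c_h = (r - 1 + 4h) / n h + 1` of `F h` is
`≡ 1 (mod n h)`. A prime `q ∤ U` divides no leading coefficient `U / n h`, and `q > H`, so some
residue of `t` mod `q` avoids the at most `H` roots of `F`. A prime `q ∣ U` divides `12 Π_H` or
some `n k`, and we take `t = 0`: if `q ∣ n h` then `q ∤ c_h` by the congruence; otherwise `q` is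
odd and divides `r - 1` (resp. `r - 1 + 4k`), so `q ∣ c_h` would give `q ∣ 2h + m_h`
(resp. `q ∣ m_h - 2(k - h)`), which the residues of Germain primes mod 3 and the gcd hypotheses
exclude. -/

open Finset

def nHalf (p : ℕ → ℕ) (h : ℕ) : ℕ := if h % 3 = 2 then p h * (2 * p h + 1) ^ 3 else p h

theorem Nat.Prime.mod_six_eq_five_of_prime_two_mul_add_one {p : ℕ} (hp : p.Prime)
    (hq : (2 * p + 1).Prime) (h3 : 3 < p) : p % 6 = 5 := by
  have hodd : p % 2 = 1 := hp.eq_two_or_odd.resolve_left (by omega)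
  have hp3 : ¬ 3 ∣ p := fun h => by have := (hp.eq_one_or_self_of_dvd 3 h); omega
  have hq3 : ¬ 3 ∣ 2 * p + 1 := fun h => by have := (hq.eq_one_or_self_of_dvd 3 h); omega
  have hmod3 : p % 3 = 2 := by omega
  omega

theorem three_lt_of_three_mul_mul_pow_lt {H : ℕ} {p : ℕ → ℕ} (hp1 : 3 < p 1)
    (hgrowth : ∀ h, 1 ≤ h → h ≤ H - 1 → 3 * p h * (2 * p h + 1) ^ 3 < p (h + 1)) :
    ∀ h, 1 ≤ h → h ≤ H → 3 < p h := by
  intro h h1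
  induction h, h1 using Nat.le_induction with
  | base => exact fun _ => hp1
  | succ k hk ih =>
    intro hkH
    calc 3 < p k := ih (by omega)
      _ ≤ 3 * p k * (2 * p k + 1) ^ 3 := by nlinarith [Nat.one_le_pow 3 (2 * p k + 1) (by omega)]
      _ < p (k + 1) := hgrowth k hk (by omega)

section nHalf

variable {p : ℕ → ℕ} {h : ℕ}

theorem nHalf_eq_or_eq (p : ℕ → ℕ) (h : ℕ) :
    nHalf p h = p h ∨ nHalf p h = p h * (2 * p h + 1) ^ 3 := by
  unfold nHalf; split_ifs <;> simp

theorem nHalf_mod_six (hp : p h % 6 = 5) : nHalf p h % 6 = if h % 3 = 2 then 1 else 5 := by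
  unfold nHalf; split_ifs
  · simp [Nat.mul_mod, Nat.pow_mod, Nat.add_mod, hp]
  · exact hp

theorem nHalf_odd (hp : p h % 6 = 5) : Odd (nHalf p h) := by
  have := nHalf_mod_six hp
  exact Nat.odd_iff.2 (by split_ifs at this <;> omega)

theorem Nat.Prime.dvd_mul_two_mul_add_one_of_dvd_nHalf {q : ℕ} (hq : q.Prime)
    (hqd : q ∣ nHalf p h) : q ∣ p h * (2 * p h + 1) := by
  unfold nHalf at hqd; split_ifs at hqd
  · rcases hq.dvd_mul.1 hqd with hd | hd
    · exact hd.mul_right _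
    · exact (hq.dvd_of_dvd_pow hd).mul_left _
  · exact hqd.mul_right _

end nHalf

theorem mul_self_dvd_sub_one_add_four_mul {r h n m : ℕ} (hn : n = 2 * m) (hm : Odd m)
    (h4 : (4 : ℤ) ∣ r - 1) (hr : (r : ℤ) ≡ 1 - 4 * h [ZMOD ((n / 2) ^ 2 : ℕ)]) :
    (n : ℤ) * n ∣ r - 1 + 4 * h := by
  subst hn
  rw [Nat.mul_div_cancel_left _ two_pos] at hr
  have hcop : IsCoprime (2 ^ 2 : ℤ) ((m : ℤ) ^ 2) := (Int.isCoprime_two_left.2 hm.natCast).pow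
  have hm2 : (m : ℤ) ^ 2 ∣ r - 1 + 4 * h := by
    simpa [sub_sub_eq_add_sub, add_sub_right_comm] using hr.symm.dvd
  have := hcop.mul_dvd (dvd_add h4 (dvd_mul_right 4 (h : ℤ))) hm2
  rwa [Nat.cast_mul, Nat.cast_two, show (2 * m * (2 * m) : ℤ) = 2 ^ 2 * m ^ 2 by ring]

theorem Int.not_dvd_ediv_add_one_of_dvd {X d q : ℤ} (hX : d * d ∣ X) (hqd : q ∣ d)
    (hq : ¬ IsUnit q) : ¬ q ∣ X / d + 1 := fun hc =>
  hq (isUnit_of_dvd_one ((dvd_add_right (hqd.trans (dvd_div_of_mul_dvd hX))).1 hc))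

theorem Int.not_dvd_ediv_add_one_of_eq_add_two_mul {X d A B q : ℤ} (hd : d ∣ X)
    (hXd : X + d = A + 2 * B) (hq : Prime q) (hq2 : ¬ q ∣ 2) (hqA : q ∣ A) (hqB : ¬ q ∣ B) :
    ¬ q ∣ X / d + 1 := by
  intro hc
  have hqXd : q ∣ X + d := by
    simpa [mul_add, Int.mul_ediv_cancel' hd] using hc.mul_left d
  rw [hXd, dvd_add_right hqA] at hqXd
  exact (hq.dvd_mul.1 hqXd).elim hq2 hqB

theorem exists_not_dvd_prod_mul_add {ι : Type*} (s : Finset ι) (a b : ι → ℤ) {q : ℕ}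
    (hq : q.Prime) (hs : #s < q) (ha : ∀ i ∈ s, ¬ (q : ℤ) ∣ a i) :
    ∃ t : ℤ, ¬ (q : ℤ) ∣ ∏ i ∈ s, (a i * t + b i) := by
  have := Fact.mk hq
  classical
  obtain ⟨x, -, hx⟩ := exists_mem_notMem_of_card_lt_card
    (s := s.image fun i => -(b i : ZMod q) / a i) (t := univ)
    (by rw [card_univ, ZMod.card]; exact card_image_le.trans_lt hs)
  refine ⟨x.val, fun hdvd => hx ?_⟩
  rw [← ZMod.intCast_zmod_eq_zero_iff_dvd, Int.cast_prod, prod_eq_zero_iff] at hdvd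
  obtain ⟨i, hi, hroot⟩ := hdvd
  have hai : (a i : ZMod q) ≠ 0 := fun h0 => ha i hi ((ZMod.intCast_zmod_eq_zero_iff_dvd _ _).1 h0)
  refine mem_image.2 ⟨i, hi, ?_⟩
  push_cast [ZMod.natCast_val, ZMod.cast_id] at hroot
  rw [div_eq_iff hai]
  linear_combination -hroot

theorem exists_not_dvd_prod_mul_add_of_dvd {ι : Type*} {s : Finset ι} {a b : ι → ℤ} {U : ℤ}
    {q : ℕ} (hq : q.Prime) (ha : ∀ i ∈ s, a i ∣ U)
    (hb : (q : ℤ) ∣ U → ∀ i ∈ s, ¬ (q : ℤ) ∣ b i) (hs : ¬ (q : ℤ) ∣ U → #s < q) :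
    ∃ t : ℤ, ¬ (q : ℤ) ∣ ∏ i ∈ s, (a i * t + b i) := by
  by_cases hqU : (q : ℤ) ∣ U
  · refine ⟨0, ?_⟩
    simp only [mul_zero, zero_add, (Nat.prime_iff_prime_int.1 hq).dvd_finsetProd_iff, not_exists,
      not_and]
    exact hb hqU
  · exact exists_not_dvd_prod_mul_add s a b hq (hs hqU) fun i hi hqa => hqU (hqa.trans (ha i hi))

theorem Nat.Prime.dvd_twelve_mul_prod_primes_iff {q H : ℕ} (hq : q.Prime) :
    q ∣ 12 * ∏ q' ∈ (Icc 5 H).filter Nat.Prime, q' ↔ q ≤ max 3 H := by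
  rw [hq.dvd_mul, hq.prime.dvd_finsetProd_iff]
  constructor
  · rintro (h12 | ⟨q', hq', hqq'⟩)
    · have := Nat.le_of_dvd (by norm_num) h12
      interval_cases q <;> simp_all +decide
    · rw [mem_filter, mem_Icc] at hq'
      have := (Nat.prime_dvd_prime_iff_eq hq hq'.2).1 hqq'
      omega
  · intro hqH
    by_cases hq5 : q < 5
    · interval_cases q <;> simp_all +decide
    · exact Or.inr ⟨q, mem_filter.2 ⟨mem_Icc.2 ⟨by omega, by omega⟩, hq⟩, dvd_rfl⟩

theorem Nat.Prime.dvd_twelve_mul_prod_primes_mul_prod_pow_iff {q H : ℕ} (hq : q.Prime)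
    (n : ℕ → ℕ) :
    q ∣ 12 * (∏ q' ∈ (Icc 5 H).filter Nat.Prime, q') * ∏ h ∈ Icc 1 H, n h ^ 5 ↔
      q ≤ max 3 H ∨ ∃ k ∈ Icc 1 H, q ∣ n k := by
  simp only [hq.dvd_mul (m := 12 * _), hq.dvd_twelve_mul_prod_primes_iff,
    hq.prime.dvd_finsetProd_iff, hq.prime.dvd_pow_iff_dvd (by norm_num : 5 ≠ 0)]

theorem not_dvd_two_mul_add_nHalf {H q h : ℕ} {p : ℕ → ℕ} (hp : p h % 6 = 5)
    (hsmall : ∀ q : ℕ, q.Prime → 5 ≤ q → q ≤ H →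
      Nat.gcd (2 * h + p h) q = 1 ∧ Nat.gcd (2 * h + p h * (2 * p h + 1) ^ 3) q = 1)
    (hq : q.Prime) (hqH : q ≤ max 3 H) (hq2 : q ≠ 2) : ¬ q ∣ 2 * h + nHalf p h := by
  by_cases hq3 : q ≤ 3
  · have := nHalf_mod_six hp
    obtain rfl : q = 3 := by have := hq.two_le; omega
    split_ifs at this <;> omega
  have hq5 : 5 ≤ q := by
    by_contra
    obtain rfl : q = 4 := by omega
    norm_num at hq
  rw [← hq.coprime_iff_not_dvd, Nat.coprime_comm]
  rcases nHalf_eq_or_eq p h with hm | hm <;> rw [hm]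
  exacts [(hsmall q hq hq5 (by omega)).1, (hsmall q hq hq5 (by omega)).2]

theorem not_dvd_nHalf_sub {q h k : ℕ} {p : ℕ → ℕ}
    (hcross : Int.gcd ((p h : ℤ) - 2 * ((k : ℤ) - (h : ℤ))) ((p k : ℤ) * (2 * (p k : ℤ) + 1)) = 1 ∧
      Int.gcd ((p h : ℤ) * (2 * (p h : ℤ) + 1) ^ 3 - 2 * ((k : ℤ) - (h : ℤ)))
        ((p k : ℤ) * (2 * (p k : ℤ) + 1)) = 1)
    (hq : q.Prime) (hqk : q ∣ nHalf p k) : ¬ (q : ℤ) ∣ nHalf p h - 2 * ((k : ℤ) - h) := by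
  intro hqh
  have hqk' : (q : ℤ) ∣ (p k : ℤ) * (2 * (p k : ℤ) + 1) := by
    exact_mod_cast hq.dvd_mul_two_mul_add_one_of_dvd_nHalf hqk
  have hq1 : q ∣ 1 := by
    rcases nHalf_eq_or_eq p h with hm | hm <;> rw [hm] at hqh <;> push_cast at hqh
    · have hgcd := Int.dvd_gcd hqh hqk'
      rw [hcross.1] at hgcd
      exact_mod_cast hgcd
    · have hgcd := Int.dvd_gcd hqh hqk'
      rw [hcross.2] at hgcd
      exact_mod_cast hgcd
  exact hq.one_lt.ne' (Nat.dvd_one.1 hq1)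

theorem not_dvd_constantCoeff {H r q h : ℕ} {p n : ℕ → ℕ} (hq : q.Prime)
    (hn : ∀ k, n k = 2 * nHalf p k)
    (hX : ∀ k, 1 ≤ k → k ≤ H → (n k : ℤ) * n k ∣ r - 1 + 4 * k)
    (hr : q ≤ max 3 H → (q : ℤ) ∣ r - 1)
    (hsmall : q ≤ max 3 H → q ≠ 2 → ¬ q ∣ 2 * h + nHalf p h)
    (hcross : ∀ k, 1 ≤ k → k ≤ H → k ≠ h → q ∣ nHalf p k →
      ¬ (q : ℤ) ∣ nHalf p h - 2 * ((k : ℤ) - h))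
    (hqU : q ≤ max 3 H ∨ ∃ k ∈ Icc 1 H, q ∣ n k) (h1 : 1 ≤ h) (h2 : h ≤ H) :
    ¬ (q : ℤ) ∣ (r - 1 + 4 * h) / n h + 1 := by
  have hqZ : Prime (q : ℤ) := Nat.prime_iff_prime_int.1 hq
  by_cases hqn : q ∣ n h
  · exact Int.not_dvd_ediv_add_one_of_dvd (hX h h1 h2) (Int.natCast_dvd_natCast.2 hqn) hqZ.not_isUnit
  have hq2 : q ≠ 2 := by rintro rfl; exact hqn (hn h ▸ dvd_mul_right 2 _)
  have hq2' : ¬ (q : ℤ) ∣ 2 := fun hd =>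
    hq2 ((Nat.prime_dvd_prime_iff_eq hq Nat.prime_two).1 (by exact_mod_cast hd))
  have hnX : (n h : ℤ) ∣ r - 1 + 4 * h := (dvd_mul_right _ _).trans (hX h h1 h2)
  rcases hqU with hqH | ⟨k, hk, hqk⟩
  · refine Int.not_dvd_ediv_add_one_of_eq_add_two_mul hnX ?_ hqZ hq2' (hr hqH)
      (B := ((2 * h + nHalf p h : ℕ) : ℤ)) (mt Int.natCast_dvd_natCast.1 (hsmall hqH hq2))
    push_cast [hn]; ring
  · rw [mem_Icc] at hk
    have hkh : k ≠ h := by rintro rfl; exact hqn hqk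
    have hqk' : q ∣ nHalf p k :=
      ((Nat.coprime_primes hq Nat.prime_two).2 hq2).dvd_of_dvd_mul_left (hn k ▸ hqk)
    refine Int.not_dvd_ediv_add_one_of_eq_add_two_mul hnX ?_ hqZ hq2'
      (((Int.natCast_dvd_natCast.2 hqk).mul_right _).trans (hX k hk.1 hk.2))
      (hcross k hk.1 hk.2 hkh hqk')
    push_cast [hn]; ring

theorem auxiliary_polynomial_no_fixed_prime_divisor_general
    (H : ℕ) (p : ℕ → ℕ)
    (hgermain : ∀ h, 1 ≤ h → h ≤ H → (p h).Prime ∧ (2 * p h + 1).Prime)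
    (hp1 : 4 * H + 1 < p 1)
    (hgrowth : ∀ h, 1 ≤ h → h ≤ H - 1 → 3 * p h * (2 * p h + 1) ^ 3 < p (h + 1))
    (hsmall : ∀ h, 1 ≤ h → h ≤ H → ∀ q : ℕ, q.Prime → 5 ≤ q → q ≤ H →
        Nat.gcd (2 * h + p h) q = 1 ∧
        Nat.gcd (2 * h + p h * (2 * p h + 1) ^ 3) q = 1)
    (hcross : ∀ h k, 1 ≤ h → h ≤ H → 1 ≤ k → k ≤ H → h ≠ k →
        Int.gcd ((p h : ℤ) - 2 * ((k : ℤ) - (h : ℤ))) ((p k : ℤ) * (2 * (p k : ℤ) + 1)) = 1 ∧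
        Int.gcd ((p h : ℤ) * (2 * (p h : ℤ) + 1) ^ 3 - 2 * ((k : ℤ) - (h : ℤ)))
          ((p k : ℤ) * (2 * (p k : ℤ) + 1)) = 1)
    (n : ℕ → ℕ)
    (hn : ∀ h, n h = if h % 3 = 2 then 2 * p h * (2 * p h + 1) ^ 3 else 2 * p h)
    (Pi : ℕ) (hPi : Pi = ∏ q ∈ (Finset.Icc 5 H).filter Nat.Prime, q)
    (U : ℕ) (hU : U = 12 * Pi * ∏ h ∈ Finset.Icc 1 H, (n h) ^ 5)
    (r : ℕ)
    (hr1 : r ≡ 1 [MOD 12 * Pi])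
    (hr2 : ∀ h, 1 ≤ h → h ≤ H →
        (r : ℤ) ≡ 1 - 4 * (h : ℤ) [ZMOD ((n h / 2 : ℕ) ^ 2 : ℕ)]) :
    -- each `F h` is linear with integer coefficients and positive leading coefficient
    (∀ h, 1 ≤ h → h ≤ H →
        (n h : ℤ) ∣ (U : ℤ) ∧ (n h : ℤ) ∣ ((r : ℤ) - 1 + 4 * (h : ℤ)) ∧
        0 < (U : ℤ) / (n h : ℤ)) ∧
    -- the product `F` has no fixed prime divisor
    (∀ q : ℕ, q.Prime → ∃ t : ℤ,
        ¬ ((q : ℤ) ∣ ∏ h ∈ Finset.Icc 1 H,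
            (((U : ℤ) * t + (r : ℤ) - 1 + 4 * (h : ℤ)) / (n h : ℤ) + 1))) := by
  have hp5 : ∀ h, 1 ≤ h → h ≤ H → p h % 6 = 5 := fun h h1 h2 =>
    (hgermain h h1 h2).1.mod_six_eq_five_of_prime_two_mul_add_one (hgermain h h1 h2).2
      (three_lt_of_three_mul_mul_pow_lt (by omega) hgrowth h h1 h2)
  have hn2 : ∀ h, n h = 2 * nHalf p h := fun h => by rw [hn, nHalf]; split_ifs <;> ring
  have hodd : ∀ h, 1 ≤ h → h ≤ H → Odd (nHalf p h) := fun h h1 h2 => nHalf_odd (hp5 h h1 h2)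
  have h12 : ((12 * Pi : ℕ) : ℤ) ∣ r - 1 := dvd_sub_comm.1 (Nat.modEq_iff_dvd.1 hr1)
  have hr : ∀ q : ℕ, q.Prime → q ≤ max 3 H → (q : ℤ) ∣ r - 1 := fun q hq hqH =>
    (Int.natCast_dvd_natCast.2 (hPi ▸ hq.dvd_twelve_mul_prod_primes_iff.2 hqH)).trans h12
  have hX : ∀ h, 1 ≤ h → h ≤ H → (n h : ℤ) * n h ∣ r - 1 + 4 * h := fun h h1 h2 =>
    mul_self_dvd_sub_one_add_four_mul (hn2 h) (hodd h h1 h2)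
      (dvd_trans ⟨3 * Pi, by push_cast; ring⟩ h12) (hr2 h h1 h2)
  have hnU : ∀ h, 1 ≤ h → h ≤ H → (n h : ℤ) ∣ U := fun h h1 h2 => by
    have hn5 : n h ∣ ∏ k ∈ Icc 1 H, n k ^ 5 :=
      (dvd_pow_self (n h) (by norm_num : 5 ≠ 0)).trans (dvd_prod_of_mem _ (mem_Icc.2 ⟨h1, h2⟩))
    exact Int.natCast_dvd_natCast.2 (hU ▸ hn5.mul_left _)
  have hUpos : 0 < U := hU ▸ hPi ▸ Nat.mul_pos
    (Nat.mul_pos (by norm_num) (prod_pos fun q hq => (mem_filter.1 hq).2.pos))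
    (prod_pos fun h hh => pow_pos (hn2 h ▸ Nat.mul_pos two_pos
      (hodd h (mem_Icc.1 hh).1 (mem_Icc.1 hh).2).pos) 5)
  have hF : ∀ t : ℤ, ∀ h ∈ Icc 1 H, ((U : ℤ) * t + r - 1 + 4 * h) / n h + 1 =
      U / n h * t + ((r - 1 + 4 * h) / n h + 1) := fun t h hh => by
    have hnUh := hnU h (mem_Icc.1 hh).1 (mem_Icc.1 hh).2
    rw [add_sub_assoc, add_assoc, Int.add_ediv_of_dvd_left (hnUh.mul_right t),
      Int.mul_ediv_assoc' _ hnUh, ← add_assoc]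
  refine ⟨fun h h1 h2 => ⟨hnU h h1 h2, (dvd_mul_right _ _).trans (hX h h1 h2),
    Int.ediv_pos_of_pos_of_dvd (by exact_mod_cast hUpos) (by positivity) (hnU h h1 h2)⟩,
    fun q hq => ?_⟩
  simp only [prod_congr rfl (hF _)]
  have hqU := hq.dvd_twelve_mul_prod_primes_mul_prod_pow_iff (H := H) n
  rw [← hPi, ← hU] at hqU
  refine exists_not_dvd_prod_mul_add_of_dvd hq
    (fun h hh => Int.ediv_dvd_of_dvd (hnU h (mem_Icc.1 hh).1 (mem_Icc.1 hh).2))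
    (fun hqU' h hh => ?_) (fun hqU' => ?_)
  · obtain ⟨h1, h2⟩ := mem_Icc.1 hh
    exact not_dvd_constantCoeff hq hn2 hX (hr q hq)
      (not_dvd_two_mul_add_nHalf (hp5 h h1 h2) (hsmall h h1 h2) hq)
      (fun k hk1 hk2 hkh => not_dvd_nHalf_sub (hcross h k h1 h2 hk1 hk2 hkh.symm) hq)
      (hqU.1 (Int.natCast_dvd_natCast.1 hqU')) h1 h2
  · rw [Nat.card_Icc, add_tsub_cancel_right]
    by_contra hqH
    exact hqU' (Int.natCast_dvd_natCast.2 (hqU.2 (Or.inl (le_max_of_le_right (not_lt.1 hqH)))))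

/-- Let `H ≥ 5` and let `p 1, …, p H` be Sophie Germain primes satisfying the conditions
of Proposition 1. With `n h = 2 * p h` or `2 * p h * (2 * p h + 1)^3` according to
`h % 3 ≠ 2` or `h % 3 = 2`, `Π_H` the product of the primes in `[5, H]`,
`U = 12 * Π_H * ∏_{h=1}^H (n h)^5`, and `r ≡ 1 (mod 12 Π_H)`,
`r ≡ 1 - 4h (mod (n h / 2)^2)` for `1 ≤ h ≤ H`, each
`F h (t) = (U*t + r - 1 + 4*h) / n h + 1` is a linear polynomial with integer
coefficients and positive leading coefficient, and the product `F = ∏ F h` has no fixed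
prime divisor. -/
theorem auxiliary_polynomial_no_fixed_prime_divisor
    (H : ℕ) (hH : 5 ≤ H) (p : ℕ → ℕ)
    (hgermain : ∀ h, 1 ≤ h → h ≤ H → (p h).Prime ∧ (2 * p h + 1).Prime)
    (hp1 : 4 * H + 1 < p 1)
    (hgrowth : ∀ h, 1 ≤ h → h ≤ H - 1 → 3 * p h * (2 * p h + 1) ^ 3 < p (h + 1))
    (hsmall : ∀ h, 1 ≤ h → h ≤ H → ∀ q : ℕ, q.Prime → 5 ≤ q → q ≤ H →
        Nat.gcd (2 * h + p h) q = 1 ∧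
        Nat.gcd (2 * h + p h * (2 * p h + 1) ^ 3) q = 1)
    (hcross : ∀ h k, 1 ≤ h → h ≤ H → 1 ≤ k → k ≤ H → h ≠ k →
        Int.gcd ((p h : ℤ) - 2 * ((k : ℤ) - (h : ℤ))) ((p k : ℤ) * (2 * (p k : ℤ) + 1)) = 1 ∧
        Int.gcd ((p h : ℤ) * (2 * (p h : ℤ) + 1) ^ 3 - 2 * ((k : ℤ) - (h : ℤ)))
          ((p k : ℤ) * (2 * (p k : ℤ) + 1)) = 1)
    (n : ℕ → ℕ)
    (hn : ∀ h, n h = if h % 3 = 2 then 2 * p h * (2 * p h + 1) ^ 3 else 2 * p h)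
    (Pi : ℕ) (hPi : Pi = ∏ q ∈ (Finset.Icc 5 H).filter Nat.Prime, q)
    (U : ℕ) (hU : U = 12 * Pi * ∏ h ∈ Finset.Icc 1 H, (n h) ^ 5)
    (r : ℕ) (hr : 0 < r)
    (hr1 : r ≡ 1 [MOD 12 * Pi])
    (hr2 : ∀ h, 1 ≤ h → h ≤ H →
        (r : ℤ) ≡ 1 - 4 * (h : ℤ) [ZMOD ((n h / 2 : ℕ) ^ 2 : ℕ)]) :
    -- each `F h` is linear with integer coefficients and positive leading coefficient
    (∀ h, 1 ≤ h → h ≤ H →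
        (n h : ℤ) ∣ (U : ℤ) ∧ (n h : ℤ) ∣ ((r : ℤ) - 1 + 4 * (h : ℤ)) ∧
        0 < (U : ℤ) / (n h : ℤ)) ∧
    -- the product `F` has no fixed prime divisor
    (∀ q : ℕ, q.Prime → ∃ t : ℤ,
        ¬ ((q : ℤ) ∣ ∏ h ∈ Finset.Icc 1 H,
            (((U : ℤ) * t + (r : ℤ) - 1 + 4 * (h : ℤ)) / (n h : ℤ) + 1))) :=
  auxiliary_polynomial_no_fixed_prime_divisor_general H p hgermain hp1 hgrowth hsmall hcross n hn Pi
    hPi U hU r hr1 hr2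
end

section
/- Let 0 < ε < 1 and let m be a positive integer such that at least (3 − ε)·m of the residue classes a (mod 4m) with 0 < a < 4m are totient-free. Then for all positive reals H and x, the number of values of Euler's totient function lying in the interval (x, x + H] is at most (1 + ε)·H/4 + 2m. -/
/-!
A totient value `v` lies in the residue class `v mod 4m`, which is therefore not totient-free.
So the totient values in `(x, x + H]` meet at most `4m - (3 - ε)m = (1 + ε)m` residue classes
mod `4m`, and each class contains at most `H / 4m + 1` integers of the interval. Hence there
are at most `(1 + ε)H/4 + (1 + ε)m ≤ (1 + ε)H/4 + 2m` such values.
-/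

/-- A residue class `a (mod q)` is totient-free if no positive integer `n` satisfies
`φ(n) ≡ a (mod q)`. -/
def TotientFree (a q : ℕ) : Prop :=
  ∀ n : ℕ, 0 < n → ¬ (Nat.totient n ≡ a [MOD q])

/-- The set of values of Euler's totient function on the positive integers. -/
def totientValues : Set ℕ := {v : ℕ | ∃ n : ℕ, 0 < n ∧ Nat.totient n = v}

lemma not_totientFree_mod {v : ℕ} (hv : v ∈ totientValues) (q : ℕ) :
    ¬ TotientFree (v % q) q := by
  obtain ⟨n, hn, rfl⟩ := hv
  exact fun hfree => hfree n hn (Nat.mod_modEq _ q).symm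

lemma card_image_mod_add_ncard_totientFree_le {q : ℕ} (hq : 0 < q) {T : Finset ℕ}
    (hT : ∀ v ∈ T, v ∈ totientValues) :
    (T.image (· % q)).card + {a : ℕ | 0 < a ∧ a < q ∧ TotientFree a q}.ncard ≤ q := by
  set A : Set ℕ := ↑(T.image (· % q))
  set G : Set ℕ := {a : ℕ | 0 < a ∧ a < q ∧ TotientFree a q}
  have hdisj : Disjoint A G := by
    refine Set.disjoint_left.2 fun r hrA hrG => ?_
    obtain ⟨v, hvT, rfl⟩ := Finset.mem_image.1 (Finset.mem_coe.1 hrA)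
    exact not_totientFree_mod (hT v hvT) q hrG.2.2
  have hsub : A ∪ G ⊆ Set.Iio q := by
    rintro r (hr | hr)
    · obtain ⟨v, -, rfl⟩ := Finset.mem_image.1 (Finset.mem_coe.1 hr)
      exact Nat.mod_lt v hq
    · exact hr.2.1
  calc (T.image (· % q)).card + G.ncard = (A ∪ G).ncard := by
        rw [Set.ncard_union_eq hdisj (Finset.finite_toSet _)
          ((Set.finite_Iio q).subset fun a ha => ha.2.1), Set.ncard_coe_finset]
    _ ≤ (Set.Iio q).ncard := Set.ncard_le_ncard hsub (Set.finite_Iio q)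
    _ = q := Set.ncard_Iio_nat q

lemma card_le_floor_div_add_one_of_mod_eq {q r : ℕ} {x H : ℝ} {s : Finset ℕ}
    (hmod : ∀ v ∈ s, v % q = r) (hs : ∀ v ∈ s, x < v ∧ (v : ℝ) ≤ x + H) :
    s.card ≤ ⌊H / q⌋₊ + 1 := by
  rcases s.eq_empty_or_nonempty with rfl | hne
  · simp
  set v₀ := s.min' hne
  have hv₀ : v₀ ∈ s := s.min'_mem hne
  have hdecomp : ∀ v ∈ s, q * ((v - v₀) / q) = v - v₀ ∧ v₀ ≤ v := fun v hv =>
    have hle : v₀ ≤ v := s.min'_le v hv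
    ⟨Nat.mul_div_cancel' <| (Nat.modEq_iff_dvd' hle).1 <| (hmod v₀ hv₀).trans (hmod v hv).symm,
      hle⟩
  calc s.card ≤ (Finset.range (⌊H / q⌋₊ + 1)).card := by
        refine Finset.card_le_card_of_injOn (fun v => (v - v₀) / q) (fun v hv => ?_) ?_
        · obtain ⟨hdiv, hle⟩ := hdecomp v hv
          have hlt : ((q * ((v - v₀) / q) : ℕ) : ℝ) < H := by
            rw [hdiv, Nat.cast_sub hle]; linarith [(hs v hv).2, (hs v₀ hv₀).1]
          suffices (((v - v₀) / q : ℕ) : ℝ) ≤ H / q from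
            Finset.mem_range_succ_iff.2 (Nat.le_floor this)
          rcases Nat.eq_zero_or_pos q with rfl | hq
          · simp
          rw [le_div_iff₀ (by exact_mod_cast hq)]
          push_cast at hlt
          linarith
        · intro v hv w hw hvw
          simp only at hvw
          obtain ⟨hv', hv₀v⟩ := hdecomp v hv
          obtain ⟨hw', hv₀w⟩ := hdecomp w hw
          rw [hvw, hw'] at hv'
          omega
    _ = ⌊H / q⌋₊ + 1 := Finset.card_range _

lemma card_le_floor_div_add_one_mul_card_image_mod (q : ℕ) {x H : ℝ} {T : Finset ℕ}
    (hT : ∀ v ∈ T, x < v ∧ (v : ℝ) ≤ x + H) :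
    T.card ≤ (⌊H / q⌋₊ + 1) * (T.image (· % q)).card :=
  Finset.card_le_mul_card_image T _ fun r _ =>
    card_le_floor_div_add_one_of_mod_eq (r := r) (fun _ hv => (Finset.mem_filter.1 hv).2)
      fun v hv => hT v (Finset.mem_filter.1 hv).1

theorem totient_values_in_interval_le_general (ε : ℝ) (hε1 : ε < 1)
    (m : ℕ) (hm : 0 < m)
    (hfree : (3 - ε) * m ≤
      (({a : ℕ | 0 < a ∧ a < 4 * m ∧ TotientFree a (4 * m)}.ncard : ℝ)))
    (H x : ℝ) (hH : 0 < H) :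
    (({v : ℕ | v ∈ totientValues ∧ x < (v : ℝ) ∧ (v : ℝ) ≤ x + H}.ncard : ℝ)) ≤
      (1 + ε) * H / 4 + 2 * m := by
  set S := {v : ℕ | v ∈ totientValues ∧ x < (v : ℝ) ∧ (v : ℝ) ≤ x + H}
  have hS : S.Finite := (Set.finite_Iic ⌊x + H⌋₊).subset fun v hv => Nat.le_floor hv.2.2
  set T := hS.toFinset
  have hTS : ∀ v ∈ T, v ∈ S := fun v hv => hS.mem_toFinset.1 hv
  have hcount := card_le_floor_div_add_one_mul_card_image_mod (4 * m) fun v hv => (hTS v hv).2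
  have hclasses : ((T.image (· % (4 * m))).card : ℝ) ≤ (1 + ε) * m := by
    have hres := Nat.cast_le (α := ℝ).2 <| card_image_mod_add_ncard_totientFree_le
      (q := 4 * m) (by positivity) fun v hv => (hTS v hv).1
    push_cast at hres
    linarith
  have hfloor : (⌊H / (4 * m : ℕ)⌋₊ : ℝ) ≤ H / (4 * m) := by
    simpa using Nat.floor_le (by positivity : 0 ≤ H / (4 * m : ℕ))
  rw [Set.ncard_eq_toFinset_card S hS]
  calc (T.card : ℝ) ≤ (⌊H / (4 * m : ℕ)⌋₊ + 1) * (T.image (· % (4 * m))).card := by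
        exact_mod_cast hcount
    _ ≤ (H / (4 * m) + 1) * ((1 + ε) * m) := by gcongr
    _ = (1 + ε) * H / 4 + (1 + ε) * m := by field_simp
    _ ≤ (1 + ε) * H / 4 + 2 * m := by gcongr; linarith

/-- If `0 < ε < 1` and `m` is a positive integer such that at least `(3 - ε) * m` of the
residue classes `a (mod 4m)` with `0 < a < 4m` are totient-free, then for all positive
reals `H` and `x`, the number of totient values in `(x, x + H]` is at most
`(1 + ε) * H / 4 + 2 * m`. -/
theorem totient_values_in_interval_le (ε : ℝ) (hε0 : 0 < ε) (hε1 : ε < 1)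
    (m : ℕ) (hm : 0 < m)
    (hfree : (3 - ε) * m ≤
      (({a : ℕ | 0 < a ∧ a < 4 * m ∧ TotientFree a (4 * m)}.ncard : ℝ)))
    (H x : ℝ) (hH : 0 < H) (hx : 0 < x) :
    (({v : ℕ | v ∈ totientValues ∧ x < (v : ℝ) ∧ (v : ℝ) ≤ x + H}.ncard : ℝ)) ≤
      (1 + ε) * H / 4 + 2 * m :=
  totient_values_in_interval_le_general ε hε1 m hm hfree H x hH
end
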